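/- Fix α ∈ (0,1), γ ∈ (0,α) and ρ ∈ (0,1). Let (Yβ, Yδ) be a bivariate Gaussian vector with mean (β, δ), unit variances and correlation ρ, where β ∈ ℝ and δ ≥ 0. Then P(β ≥ Yβ − min{z_{1−α+γ}, ρYδ + √(1−ρ²) z_{1−γ}}) ≥ 1−α; in particular, the intersection of the one-sided confidence intervals [Yβ − z_{1−α+γ}, ∞) and [Yβ − ρYδ − √(1−ρ²) z_{1−γ}, ∞) covers β with probability at least 1−α for all β ∈ ℝ and δ ≥ 0. -/
import Mathlib


open MeasureTheory ProbabilityTheory Real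
open scoped ENNReal NNReal

/-- The standard normal distribution on `ℝ`. -/
noncomputable def stdNormal : Measure ℝ := gaussianReal 0 1

/-- The product of two independent standard normals on `ℝ × ℝ`. -/
noncomputable def stdNormal2 : Measure (ℝ × ℝ) := stdNormal.prod stdNormal

/-- `Yβ p = β + p.1`: under `stdNormal2`, a Gaussian with mean `β` and unit variance. -/
noncomputable def Ybeta (β : ℝ) (p : ℝ × ℝ) : ℝ := β + p.1

/-- `Yδ p = δ + ρ * p.1 + √(1 - ρ²) * p.2`: under `stdNormal2`, a Gaussian with mean `δ`,
unit variance and correlation `ρ` with `Yβ`. -/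
noncomputable def Ydelta (δ ρ : ℝ) (p : ℝ × ℝ) : ℝ := δ + ρ * p.1 + Real.sqrt (1 - ρ ^ 2) * p.2

instance : IsProbabilityMeasure stdNormal := by unfold stdNormal; infer_instance
instance : IsProbabilityMeasure stdNormal2 := by unfold stdNormal2; infer_instance

lemma aux_prod_withDensity (μ ν : Measure ℝ) [SigmaFinite μ] [SigmaFinite ν]
    {f g : ℝ → ℝ≥0∞} (hf : Measurable f) (hg : Measurable g) :
    (μ.withDensity f).prod (ν.withDensity g)
      = (μ.prod ν).withDensity (fun p => f p.1 * g p.2) := by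
  have hFG : Measurable fun p : ℝ × ℝ => f p.1 * g p.2 :=
    (hf.comp measurable_fst).mul (hg.comp measurable_snd)
  ext s hs
  rw [Measure.prod_apply hs, withDensity_apply _ hs, ← lintegral_indicator hs,
    lintegral_prod _ ((hFG.indicator hs).aemeasurable),
    lintegral_withDensity_eq_lintegral_mul μ hf (measurable_measure_prodMk_left hs)]
  congr 1
  ext x
  have hslice : MeasurableSet (Prod.mk x ⁻¹' s) := measurable_prodMk_left hs
  have hind : ∀ y, s.indicator (fun p : ℝ × ℝ => f p.1 * g p.2) (x, y)
      = (Prod.mk x ⁻¹' s).indicator (fun y => f x * g y) y := by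
    intro y
    by_cases hy : (x, y) ∈ s <;> simp [Set.indicator, hy]
  simp only [Pi.mul_apply]
  simp_rw [hind]
  rw [lintegral_indicator hslice, lintegral_const_mul _ hg, withDensity_apply _ hslice]

noncomputable def stdD : ℝ × ℝ → ℝ≥0∞ := fun p => gaussianPDF 0 1 p.1 * gaussianPDF 0 1 p.2

lemma stdD_measurable : Measurable stdD :=
  ((measurable_gaussianPDF 0 1).comp measurable_fst).mul
    ((measurable_gaussianPDF 0 1).comp measurable_snd)

lemma stdNormal2_eq : stdNormal2 = (volume : Measure (ℝ × ℝ)).withDensity stdD := by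
  rw [stdNormal2, stdNormal, gaussianReal_of_var_ne_zero 0 one_ne_zero,
    aux_prod_withDensity _ _ (measurable_gaussianPDF 0 1) (measurable_gaussianPDF 0 1),
    Measure.volume_eq_prod]
  rfl

noncomputable def rotL (a b : ℝ) : (ℝ × ℝ) →ₗ[ℝ] (ℝ × ℝ) :=
  Matrix.toLin (Module.Basis.finTwoProd ℝ) (Module.Basis.finTwoProd ℝ) !![a, -b; b, a]

lemma rotL_apply (a b : ℝ) (p : ℝ × ℝ) :
    rotL a b p = (a * p.1 - b * p.2, b * p.1 + a * p.2) := by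
  rw [rotL, Matrix.toLin_finTwoProd_apply]
  ring_nf

lemma rotL_det (a b : ℝ) : LinearMap.det (rotL a b) = a ^ 2 + b ^ 2 := by
  rw [rotL, LinearMap.det_toLin, Matrix.det_fin_two_of]
  ring

lemma rotL_measurable (a b : ℝ) : Measurable (rotL a b) :=
  (LinearMap.continuous_of_finiteDimensional _).measurable

lemma rotL_map_volume (a b : ℝ) (h : a ^ 2 + b ^ 2 = 1) :
    Measure.map (rotL a b) (volume : Measure (ℝ × ℝ)) = volume := by
  rw [Measure.map_linearMap_addHaar_eq_smul_addHaar _ (by rw [rotL_det, h]; norm_num),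
    rotL_det, h]
  norm_num

lemma stdD_rot (a b : ℝ) (h : a ^ 2 + b ^ 2 = 1) (p : ℝ × ℝ) : stdD (rotL a b p) = stdD p := by
  rw [rotL_apply]
  simp only [stdD, gaussianPDF, gaussianPDFReal]
  rw [← ENNReal.ofReal_mul (by positivity), ← ENNReal.ofReal_mul (by positivity)]
  congr 1
  rw [mul_mul_mul_comm, mul_mul_mul_comm _ (Real.exp _), ← Real.exp_add, ← Real.exp_add]
  congr 2
  push_cast
  linear_combination (-((p.1 - 0) ^ 2 + (p.2 - 0) ^ 2) / 2) * h

lemma rotL_map_stdNormal2 (a b : ℝ) (h : a ^ 2 + b ^ 2 = 1) :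
    Measure.map (rotL a b) stdNormal2 = stdNormal2 := by
  ext s hs
  rw [Measure.map_apply (rotL_measurable a b) hs, stdNormal2_eq,
    withDensity_apply _ ((rotL_measurable a b) hs), withDensity_apply _ hs]
  have hae : ∀ᵐ p ∂(volume : Measure (ℝ × ℝ)).restrict ((rotL a b) ⁻¹' s),
      stdD p = stdD (rotL a b p) := by
    filter_upwards with p using (stdD_rot a b h p).symm
  rw [lintegral_congr_ae hae,
    ← setLIntegral_map hs stdD_measurable (rotL_measurable a b), rotL_map_volume a b h]

lemma halfplane_measure (a b t : ℝ) (h : a ^ 2 + b ^ 2 = 1) :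
    stdNormal2 {p : ℝ × ℝ | a * p.1 - b * p.2 ≤ t} = stdNormal (Set.Iic t) := by
  have hset : {p : ℝ × ℝ | a * p.1 - b * p.2 ≤ t}
      = (rotL a b) ⁻¹' (Set.Iic t ×ˢ Set.univ) := by
    ext p
    simp [rotL_apply]
  rw [hset, ← Measure.map_apply (rotL_measurable a b) (measurableSet_Iic.prod MeasurableSet.univ),
    rotL_map_stdNormal2 a b h, stdNormal2, Measure.prod_prod, measure_univ, mul_one]


/-- the intersected one-sided (Bonferroni) confidence interval
`[Yβ - min{z_{1-α+γ}, ρ Yδ + √(1-ρ²) z_{1-γ}}, ∞)` covers `β` with probability at least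
`1 - α` for all `β ∈ ℝ` and `δ ≥ 0`. -/
theorem stmt3 (α γ ρ β δ : ℝ) (hα : α ∈ Set.Ioo (0 : ℝ) 1) (hγ : γ ∈ Set.Ioo 0 α)
    (hρ : ρ ∈ Set.Ioo (0 : ℝ) 1) (hδ : 0 ≤ δ)
    (zαγ zγ : ℝ)
    (hzαγ : stdNormal (Set.Iic zαγ) = ENNReal.ofReal (1 - α + γ))
    (hzγ : stdNormal (Set.Iic zγ) = ENNReal.ofReal (1 - γ)) :
    ENNReal.ofReal (1 - α) ≤
      stdNormal2 {p : ℝ × ℝ |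
        Ybeta β p - min zαγ (ρ * Ydelta δ ρ p + Real.sqrt (1 - ρ ^ 2) * zγ) ≤ β} := by
  obtain ⟨hρ0, hρ1⟩ := hρ
  obtain ⟨hγ0, hγα⟩ := hγ
  obtain ⟨hα0, hα1⟩ := hα
  have hs2 : Real.sqrt (1 - ρ ^ 2) ^ 2 = 1 - ρ ^ 2 := Real.sq_sqrt (by nlinarith)
  have hs0 : 0 < Real.sqrt (1 - ρ ^ 2) := Real.sqrt_pos.mpr (by nlinarith)
  set s : ℝ := Real.sqrt (1 - ρ ^ 2) with hs_def
  have hsum : s ^ 2 + ρ ^ 2 = 1 := by rw [hs2]; ring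
  have hc0 : 0 ≤ ρ * δ / s := by positivity
  set c : ℝ := zγ + ρ * δ / s with hc_def
  have hczγ : zγ ≤ c := le_add_of_nonneg_right hc0
  have hc' : c = (zγ * s + ρ * δ) / s := by
    rw [hc_def]
    field_simp
  set A : Set (ℝ × ℝ) := Set.Iic zαγ ×ˢ Set.univ with hA_def
  set B : Set (ℝ × ℝ) := {p : ℝ × ℝ | s * p.1 - ρ * p.2 ≤ c} with hB_def
  have hBm : MeasurableSet B := by
    apply measurableSet_le
    · exact ((measurable_fst.const_mul s).sub (measurable_snd.const_mul ρ))
    · exact measurable_const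
  have hiff : ∀ x y : ℝ, (x ≤ ρ * (δ + ρ * x + s * y) + s * zγ) ↔ (s * x - ρ * y ≤ c) := by
    intro x y
    rw [hc', le_div_iff₀ hs0]
    have key : s ^ 2 * x = (1 - ρ ^ 2) * x := by rw [hs2]
    constructor <;> intro h <;> nlinarith [key]
  have hset : {p : ℝ × ℝ |
      Ybeta β p - min zαγ (ρ * Ydelta δ ρ p + Real.sqrt (1 - ρ ^ 2) * zγ) ≤ β} = A ∩ B := by
    ext p
    simp only [Ybeta, Ydelta, Set.mem_inter_iff, Set.mem_setOf_eq, hA_def, hB_def,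
      Set.mem_prod, Set.mem_Iic, Set.mem_univ, and_true, ← hs_def]
    have hmin : ∀ m : ℝ, β + p.1 - m ≤ β ↔ p.1 ≤ m := by
      intro m
      constructor <;> intro h <;> linarith
    rw [hmin, le_min_iff]
    exact and_congr_right fun _ => hiff p.1 p.2
  rw [hset]
  have hμA : stdNormal2 A = ENNReal.ofReal (1 - α + γ) := by
    rw [hA_def, stdNormal2, Measure.prod_prod, measure_univ, mul_one, hzαγ]
  have hμB : ENNReal.ofReal (1 - γ) ≤ stdNormal2 B := by
    rw [← hzγ, ← halfplane_measure s ρ zγ hsum]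
    apply measure_mono
    intro p hp
    exact le_trans hp hczγ
  have hkey : stdNormal2 (A ∪ B) + stdNormal2 (A ∩ B) = stdNormal2 A + stdNormal2 B :=
    measure_union_add_inter A hBm
  have hub : stdNormal2 (A ∪ B) ≤ 1 := prob_le_one
  have h2 : stdNormal2 (A ∪ B) + ENNReal.ofReal (1 - α)
      ≤ stdNormal2 (A ∪ B) + stdNormal2 (A ∩ B) := by
    rw [hkey, hμA]
    calc stdNormal2 (A ∪ B) + ENNReal.ofReal (1 - α)
        ≤ 1 + ENNReal.ofReal (1 - α) := by gcongr
      _ = ENNReal.ofReal (1 - α + γ) + ENNReal.ofReal (1 - γ) := by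
          rw [← ENNReal.ofReal_one, ← ENNReal.ofReal_add (by linarith) (by linarith),
            ← ENNReal.ofReal_add (by linarith) (by linarith)]
          congr 1
          ring
      _ ≤ ENNReal.ofReal (1 - α + γ) + stdNormal2 B := by gcongr
  exact (ENNReal.add_le_add_iff_left (measure_ne_top _ _)).mp h2
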